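/- arXiv:2006.13879 — 3 statements merged into one kernel-verified Lean document; each statement's English description precedes it below -/
import Mathlib

section
/- The n-species ASEP on the finite lattice {1,…,L} with closed boundaries is self-dual: its generator L_ASEP satisfies the matrix identity L_ASEP · D = D · L_ASEPᵀ, where D is the matrix indexed by pairs of configurations defined by D(η,ξ) := ∏_{k=1}^{n} ∏_{x ∈ A_k(ξ)} 1[η(x) ≥ k] · q^{−2x − 2·Σ_{j=k}^{n} N→_x^j(η)}. -/
/-!
Both sides of `L D = D Lᵀ` are sums over bonds `(x, x + 1)`: on the left, the rate of `η` at the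
bond times the change of `D(η, ξ)` when `η` is swapped there; on the right, the same with the
roles of `η` and `ξ` exchanged. The duality function factorises over sites, and a swap at a bond
leaves the factors at all other sites unchanged, since it does not move any particle across
them. The factors at `x` and `x + 1` differ only by `q⁻²` and by whether the particle of `η` at
`x + 1` is counted at `x`, so the two bond terms agree by a finite check on the relative order
of `η x`, `η (x + 1)`, `ξ x`, `ξ (x + 1)`.
-/

open Matrix BigOperators Finset

noncomputable section

namespace Stmt0

/-- Configurations of the `n`-species ASEP on sites `{1,…,L}` (site `x : Fin L`
represents the lattice site `x.val + 1`); value `0` is a hole, value `k ≥ 1` a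
particle of species `k`. -/
abbrev Conf (n L : ℕ) := Fin L → Fin (n + 1)

/-- Off-diagonal jump rates: a swap at an adjacent bond `(x, x+1)` happens at rate
`q²` if the left value is larger, and at rate `1` if the right value is larger. -/
def offdiag (n L : ℕ) (q : ℝ) (η η' : Conf n L) : ℝ :=
  ∑ x : Fin L,
    if h : (x : ℕ) + 1 < L then
      (if η' = η ∘ Equiv.swap x ⟨(x : ℕ) + 1, h⟩ ∧ η x ≠ η ⟨(x : ℕ) + 1, h⟩ then
        (if η ⟨(x : ℕ) + 1, h⟩ < η x then q ^ 2 else 1)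
      else 0)
    else 0

/-- The generator of the `n`-species ASEP on `{1,…,L}` with closed boundaries:
off-diagonal entries are the jump rates, and diagonal entries make every row sum to `0`. -/
def gen (n L : ℕ) (q : ℝ) : Matrix (Conf n L) (Conf n L) ℝ :=
  fun η η' =>
    if η' = η then
      -∑ η'' : Conf n L, (if η'' = η then 0 else offdiag n L q η η'')
    else offdiag n L q η η'

/-- `Nright n L η x j` is the number of species-`j` particles of `η` strictly to the
right of site `x`. -/
def Nright (n L : ℕ) (η : Conf n L) (x : Fin L) (j : ℕ) : ℕ :=
  (Finset.univ.filter (fun y : Fin L => x < y ∧ (η y : ℕ) = j)).card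

/-- The duality function
`D(η,ξ) = ∏_{k=1}^{n} ∏_{x ∈ A_k(ξ)} 1[η(x) ≥ k] · q^{−2x − 2 Σ_{j=k}^{n} N→_x^j(η)}`,
where `A_k(ξ)` is the set of sites occupied in `ξ` by a species-`k` particle. -/
def dualFn (n L : ℕ) (q : ℝ) : Matrix (Conf n L) (Conf n L) ℝ :=
  fun η ξ =>
    ∏ k ∈ Finset.Icc 1 n,
      ∏ x ∈ Finset.univ.filter (fun x : Fin L => (ξ x : ℕ) = k),
        (if k ≤ (η x : ℕ) then (1 : ℝ) else 0) *
          q ^ (-(2 : ℤ) * (((x : ℕ) : ℤ) + 1) -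
            2 * ∑ j ∈ Finset.Icc k n, (Nright n L η x j : ℤ))

theorem comp_swap_eq_self {α β : Type*} [DecidableEq α] {f : α → β} {i j : α}
    (h : f i = f j) : f ∘ Equiv.swap i j = f := by
  rw [Equiv.comp_swap_eq_update, h, Function.update_eq_self, ← h, Function.update_eq_self]

variable {n L : ℕ}

theorem lt_swap_apply_iff {x y z w : Fin L} (hxy : (y : ℕ) = x + 1) (hz : z ≠ x) :
    z < Equiv.swap x y w ↔ z < w := by
  rw [Equiv.swap_apply_def]
  have hz' : (z : ℕ) ≠ x := fun h => hz (Fin.ext h)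
  split_ifs <;> subst_vars <;> simp only [Fin.lt_def] <;> omega

theorem Nright_comp_swap (η : Conf n L) {x y z : Fin L} (hxy : (y : ℕ) = x + 1) (hz : z ≠ x)
    (j : ℕ) : Nright n L (η ∘ Equiv.swap x y) z j = Nright n L η z j := by
  refine Finset.card_equiv (Equiv.swap x y) fun w => ?_
  simp [lt_swap_apply_iff hxy hz]

theorem Nright_eq_of_adjacent (η : Conf n L) {x y : Fin L} (hxy : (y : ℕ) = x + 1) (j : ℕ) :
    Nright n L η x j = Nright n L η y j + if (η y : ℕ) = j then 1 else 0 := by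
  have hx : ∀ w : Fin L, x < w ↔ y < w ∨ w = y := by
    intro w
    simp only [Fin.lt_def, Fin.ext_iff]
    omega
  simp only [Nright, hx, or_and_right, Finset.filter_or]
  rw [Finset.card_union_of_disjoint]
  · congr 1
    split_ifs with h
    · rw [Finset.card_eq_one]
      refine ⟨y, Finset.ext fun w => ?_⟩
      simp only [Finset.mem_filter, Finset.mem_univ, true_and, Finset.mem_singleton,
        and_iff_left_iff_imp]
      rintro rfl
      exact h
    · simp [h]
  · exact Finset.disjoint_filter.2 fun w _ hw hw' => lt_irrefl y (hw'.1 ▸ hw.1)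

def NrightGE (n L : ℕ) (η : Conf n L) (x : Fin L) (k : ℕ) : ℤ :=
  ∑ j ∈ Finset.Icc k n, (Nright n L η x j : ℤ)

theorem NrightGE_comp_swap (η : Conf n L) {x y z : Fin L} (hxy : (y : ℕ) = x + 1)
    (hz : z ≠ x) (k : ℕ) : NrightGE n L (η ∘ Equiv.swap x y) z k = NrightGE n L η z k := by
  simp only [NrightGE, Nright_comp_swap η hxy hz]

theorem NrightGE_eq_of_adjacent (η : Conf n L) {x y : Fin L} (hxy : (y : ℕ) = x + 1) (k : ℕ) :
    NrightGE n L η x k = NrightGE n L η y k + if k ≤ (η y : ℕ) then 1 else 0 := by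
  have hmem : (η y : ℕ) ∈ Finset.Icc k n ↔ k ≤ η y := by
    simpa [Finset.mem_Icc] using fun _ => Fin.is_le (η y)
  simp only [NrightGE, Nright_eq_of_adjacent η hxy, Nat.cast_add, Nat.cast_ite, Nat.cast_one,
    Nat.cast_zero, Finset.sum_add_distrib, Finset.sum_ite_eq, hmem]

def rate (q : ℝ) (a b : ℕ) : ℝ := if b < a then q ^ 2 else 1

def weight (q : ℝ) (k m : ℕ) (e : ℤ) : ℝ :=
  if k = 0 then 1 else if k ≤ m then q ^ e else 0

def siteWeight (q : ℝ) (η : Conf n L) (x : Fin L) (k : ℕ) : ℝ :=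
  weight q k (η x) (-2 * ((x : ℕ) + 1) - 2 * NrightGE n L η x k)

theorem dualFn_eq_prod (q : ℝ) (η ξ : Conf n L) :
    dualFn n L q η ξ = ∏ x, siteWeight q η x (ξ x) := by
  simp only [dualFn, Finset.prod_filter]
  rw [Finset.prod_comm]
  refine Finset.prod_congr rfl fun x _ => ?_
  rw [Finset.prod_ite_eq]
  by_cases h0 : (ξ x : ℕ) = 0
  · simp [siteWeight, weight, h0]
  · have hmem : (ξ x : ℕ) ∈ Finset.Icc 1 n :=
      Finset.mem_Icc.2 ⟨Nat.one_le_iff_ne_zero.2 h0, Fin.is_le _⟩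
    simp [siteWeight, weight, h0, hmem, NrightGE]

theorem siteWeight_left_of_adjacent (q : ℝ) (η : Conf n L) {x y : Fin L}
    (hxy : (y : ℕ) = x + 1) (k : ℕ) :
    siteWeight q η x k = weight q k (η x)
      ((-2 * ((x : ℕ) + 1) - 2 * NrightGE n L η y k)
        - 2 * if k ≤ (η y : ℕ) then 1 else 0) := by
  rw [siteWeight, NrightGE_eq_of_adjacent η hxy]
  congr 1
  ring

theorem siteWeight_right_of_adjacent (q : ℝ) (η : Conf n L) {x y : Fin L}
    (hxy : (y : ℕ) = x + 1) (k : ℕ) :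
    siteWeight q η y k =
      weight q k (η y) ((-2 * ((x : ℕ) + 1) - 2 * NrightGE n L η y k) - 2) := by
  rw [siteWeight, hxy]
  congr 1
  push_cast
  ring

/-- The identity at a single bond `(x, y)` with `η x = a`, `η y = b`, `ξ x = α`, `ξ y = β`:
`u` and `v` are the exponents of `D` at `x` for the species `α` and `β` without the particle
of `η` at `y`, and the exponents at `y` are two less. -/
theorem rate_mul_weight_swap_sub {q : ℝ} (hq : q ≠ 0) (a b α β : ℕ) (u v : ℤ) :
    rate q a b * (weight q α b (u - 2 * if α ≤ a then 1 else 0) * weight q β a (v - 2)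
      - weight q α a (u - 2 * if α ≤ b then 1 else 0) * weight q β b (v - 2))
    = rate q α β * (weight q β a (v - 2 * if β ≤ b then 1 else 0) * weight q α b (u - 2)
      - weight q α a (u - 2 * if α ≤ b then 1 else 0) * weight q β b (v - 2)) := by
  simp only [rate, weight, show q ^ 2 = q ^ (2 : ℤ) by norm_cast]
  split_ifs <;> first
    | omega
    | (simp only [mul_one, mul_zero, sub_zero, zpow_sub₀ hq] <;> field_simp <;> ring)

theorem rate_mul_dualFn_swap_sub {q : ℝ} (hq : q ≠ 0) (η ξ : Conf n L) {x y : Fin L}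
    (hxy : (y : ℕ) = x + 1) :
    rate q (η x) (η y) * (dualFn n L q (η ∘ Equiv.swap x y) ξ - dualFn n L q η ξ)
      = rate q (ξ x) (ξ y) * (dualFn n L q η (ξ ∘ Equiv.swap x y) - dualFn n L q η ξ) := by
  have hne : x ≠ y := fun h => by simp [h] at hxy
  set R := ∏ z ∈ Finset.univ \ {x, y}, siteWeight q η z (ξ z)
  have hsplit : ∀ η' ξ' : Conf n L,
      (∀ z, z ≠ x → z ≠ y → siteWeight q η' z (ξ' z) = siteWeight q η z (ξ z)) →
      dualFn n L q η' ξ' = R * (siteWeight q η' x (ξ' x) * siteWeight q η' y (ξ' y)) := by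
    intro η' ξ' hout
    rw [dualFn_eq_prod, ← Finset.prod_sdiff (Finset.subset_univ {x, y}), Finset.prod_pair hne]
    congr 1
    refine Finset.prod_congr rfl fun z hz => ?_
    simp only [Finset.mem_sdiff, Finset.mem_univ, Finset.mem_insert, Finset.mem_singleton,
      true_and, not_or] at hz
    exact hout z hz.1 hz.2
  rw [hsplit (η ∘ Equiv.swap x y) ξ, hsplit η ξ, hsplit η (ξ ∘ Equiv.swap x y)]
  · simp only [siteWeight_left_of_adjacent q _ hxy, siteWeight_right_of_adjacent q _ hxy,
      Function.comp_apply, Equiv.swap_apply_left, Equiv.swap_apply_right,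
      NrightGE_comp_swap η hxy hne.symm]
    linear_combination R * rate_mul_weight_swap_sub hq (η x) (η y) (ξ x) (ξ y)
      (-2 * ((x : ℕ) + 1) - 2 * NrightGE n L η y (ξ x))
      (-2 * ((x : ℕ) + 1) - 2 * NrightGE n L η y (ξ y))
  · intro z hzx hzy
    simp [Equiv.swap_apply_of_ne_of_ne hzx hzy]
  · exact fun _ _ _ => rfl
  · intro z hzx hzy
    simp only [siteWeight, Function.comp_apply, Equiv.swap_apply_of_ne_of_ne hzx hzy,
      NrightGE_comp_swap η hxy hzx]

theorem gen_row_sum (q : ℝ) (η : Conf n L) : ∑ η', gen n L q η η' = 0 := by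
  set S := ∑ η'' : Conf n L, if η'' = η then 0 else offdiag n L q η η''
  have hgen : ∀ η', gen n L q η η' =
      (if η' = η then -S else 0) + if η' = η then 0 else offdiag n L q η η' := by
    intro η'
    unfold gen
    split_ifs <;> simp [S]
  simp only [hgen, Finset.sum_add_distrib, Finset.sum_ite_eq', Finset.mem_univ, if_true,
    neg_add_cancel, S]

theorem gen_mul_apply (q : ℝ) (M : Matrix (Conf n L) (Conf n L) ℝ) (η ξ : Conf n L) :
    (gen n L q * M) η ξ = ∑ η', offdiag n L q η η' * (M η' ξ - M η ξ) := by
  calc (gen n L q * M) η ξ = ∑ η', gen n L q η η' * (M η' ξ - M η ξ) := by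
        simp only [Matrix.mul_apply, mul_sub, Finset.sum_sub_distrib, ← Finset.sum_mul,
          gen_row_sum, zero_mul, sub_zero]
    _ = ∑ η', offdiag n L q η η' * (M η' ξ - M η ξ) := by
        refine Finset.sum_congr rfl fun η' _ => ?_
        rcases eq_or_ne η' η with rfl | h
        · simp
        · rw [gen, if_neg h]

theorem sum_offdiag_mul (q : ℝ) (η : Conf n L) (F : Conf n L → ℝ) (hF : F η = 0) :
    ∑ η', offdiag n L q η η' * F η' = ∑ x : Fin L,
      if h : (x : ℕ) + 1 < L then
        rate q (η x) (η ⟨(x : ℕ) + 1, h⟩) * F (η ∘ Equiv.swap x ⟨(x : ℕ) + 1, h⟩)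
      else 0 := by
  simp only [offdiag, Finset.sum_mul]
  rw [Finset.sum_comm]
  refine Finset.sum_congr rfl fun x _ => ?_
  by_cases h : (x : ℕ) + 1 < L
  · simp only [dif_pos h]
    by_cases hc : η x = η ⟨(x : ℕ) + 1, h⟩
    · simp [hc, comp_swap_eq_self hc, hF]
    · simp [hc, rate]
  · simp [h]

theorem gen_mul_apply_eq_sum_bonds (q : ℝ) (M : Matrix (Conf n L) (Conf n L) ℝ)
    (η ξ : Conf n L) :
    (gen n L q * M) η ξ = ∑ x : Fin L,
      if h : (x : ℕ) + 1 < L then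
        rate q (η x) (η ⟨(x : ℕ) + 1, h⟩) *
          (M (η ∘ Equiv.swap x ⟨(x : ℕ) + 1, h⟩) ξ - M η ξ)
      else 0 := by
  rw [gen_mul_apply, sum_offdiag_mul q η (fun η' => M η' ξ - M η ξ) (sub_self _)]

theorem mul_gen_transpose_apply (q : ℝ) (M : Matrix (Conf n L) (Conf n L) ℝ)
    (η ξ : Conf n L) :
    (M * (gen n L q)ᵀ) η ξ = ∑ x : Fin L,
      if h : (x : ℕ) + 1 < L then
        rate q (ξ x) (ξ ⟨(x : ℕ) + 1, h⟩) *
          (M η (ξ ∘ Equiv.swap x ⟨(x : ℕ) + 1, h⟩) - M η ξ)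
      else 0 := by
  rw [← Matrix.transpose_apply (M * _), Matrix.transpose_mul, Matrix.transpose_transpose,
    gen_mul_apply_eq_sum_bonds]
  rfl

theorem multispecies_ASEP_self_duality_general (n L : ℕ)
    (q : ℝ) (hq0 : 0 < q) :
    gen n L q * dualFn n L q = dualFn n L q * (gen n L q)ᵀ := by
  ext η ξ
  rw [gen_mul_apply_eq_sum_bonds, mul_gen_transpose_apply]
  refine Finset.sum_congr rfl fun x _ => ?_
  split_ifs with h
  · exact rate_mul_dualFn_swap_sub hq0.ne' η ξ rfl
  · rfl

/-- **Self-duality of the multi-species ASEP** (Theorem 1.2 in the paper):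
the generator `L_ASEP` of the `n`-species ASEP on `{1,…,L}` with closed boundaries
satisfies `L_ASEP · D = D · L_ASEPᵀ` for the duality function `D` above. -/
theorem multispecies_ASEP_self_duality (n L : ℕ) (hn : 1 ≤ n) (hL : 2 ≤ L)
    (q : ℝ) (hq0 : 0 < q) (hq1 : q < 1) :
    gen n L q * dualFn n L q = dualFn n L q * (gen n L q)ᵀ :=
  multispecies_ASEP_self_duality_general n L q hq0

end Stmt0
end
end

section
/- The single-species (r = 1) open ASEP on {0,1,…,L} is self-dual: its generator 𝓛 satisfies 𝓛 · D = D · 𝓛ᵀ, where D(η,ξ) := 1[A_1(ξ) ⊆ A_1(η) and A_{−1}(ξ) ⊆ A_{−1}(η)] · ∏_{x ∈ A_1(ξ)} Q^{−2} q^{−2x − 2 N→_x^{1}(η)} · ∏_{y ∈ A_{−1}(ξ)} q^{2y − 2 N←_y^{−1}(η)} · q^{−2 |A_{−1}(ξ)| · |A_1(η)|} · q^{|A_1(ξ)| (|A_1(ξ)| − 1)} · ∏_{y ∈ A_{−1}(ξ)} q^{2 N→_y^{1}(ξ)}. -/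
/-!
Write the duality function as `D(η, ξ) = (∏ z, 1[ξ z is a hole ∨ η z = ξ z]) · Q^(-2|A₁(ξ)|) ·
q^E(η, ξ)`. A swap at a bond `(x, x + 1)` or a flip at site `0`, applied to either argument, changes
the exponent `E` by an amount that depends only on the values of `η` and `ξ` at the sites involved:
all the counts `N→`, `N←` and cardinalities move by local occupation numbers. Both sides of
`𝓛 D = D 𝓛ᵀ` are sums of bond terms and one boundary term, and each term factors as a weight
common to both sides times an identity between finitely many local values, checked case by case.
-/

open Matrix BigOperators Finset

noncomputable section

namespace Stmt1

/-- Configurations of the single-species open ASEP on sites `{0,1,…,L}`.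
The value of a site is encoded in `Fin 3`: `0 ↦ −1`, `1 ↦ 0` (hole), `2 ↦ 1`;
this encoding is order-preserving. -/
abbrev Conf (L : ℕ) := Fin (L + 1) → Fin 3

/-- Bulk off-diagonal rates: a swap at an adjacent bond `(x, x+1)` happens at rate
`q²` if the left value is larger, and at rate `1` if the right value is larger. -/
def bulk (L : ℕ) (q : ℝ) (η η' : Conf L) : ℝ :=
  ∑ x : Fin (L + 1),
    if h : (x : ℕ) + 1 < L + 1 then
      (if η' = η ∘ Equiv.swap x ⟨(x : ℕ) + 1, h⟩ ∧ η x ≠ η ⟨(x : ℕ) + 1, h⟩ then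
        (if η ⟨(x : ℕ) + 1, h⟩ < η x then q ^ 2 else 1)
      else 0)
    else 0

/-- Boundary off-diagonal rates at site `0`: a `1` becomes a `−1` at rate `1`
and a `−1` becomes a `1` at rate `Q²`. -/
def bdry (L : ℕ) (Q : ℝ) (η η' : Conf L) : ℝ :=
  if (∀ z : Fin (L + 1), z ≠ 0 → η' z = η z) ∧ η 0 = 2 ∧ η' 0 = 0 then 1
  else if (∀ z : Fin (L + 1), z ≠ 0 → η' z = η z) ∧ η 0 = 0 ∧ η' 0 = 2 then Q ^ 2
  else 0

/-- The generator `𝓛` of the single-species open ASEP on `{0,…,L}`: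
off-diagonal entries are bulk plus boundary rates, diagonal entries make every
row sum to `0`. -/
def gen (L : ℕ) (q Q : ℝ) : Matrix (Conf L) (Conf L) ℝ :=
  fun η η' =>
    if η' = η then
      -∑ η'' : Conf L,
        (if η'' = η then 0 else bulk L q η η'' + bdry L Q η η'')
    else bulk L q η η' + bdry L Q η η'

/-- `A_1(ξ)`: the set of sites holding a `1`. -/
def A1 (L : ℕ) (ξ : Conf L) : Finset (Fin (L + 1)) :=
  Finset.univ.filter (fun x => ξ x = 2)

/-- `A_{−1}(ξ)`: the set of sites holding a `−1`. -/
def Am1 (L : ℕ) (ξ : Conf L) : Finset (Fin (L + 1)) :=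
  Finset.univ.filter (fun x => ξ x = 0)

/-- `N→_x^1(η)`: the number of `1`'s of `η` strictly to the right of `x`. -/
def NrP (L : ℕ) (η : Conf L) (x : Fin (L + 1)) : ℕ :=
  (Finset.univ.filter (fun y : Fin (L + 1) => x < y ∧ η y = 2)).card

/-- `N←_x^{−1}(η)`: the number of `−1`'s of `η` strictly to the left of `x`. -/
def NlM (L : ℕ) (η : Conf L) (x : Fin (L + 1)) : ℕ :=
  (Finset.univ.filter (fun y : Fin (L + 1) => y < x ∧ η y = 0)).card

/-- The duality function of Theorem 1.3:
`D(η,ξ) = 1[A₁(ξ) ⊆ A₁(η) ∧ A₋₁(ξ) ⊆ A₋₁(η)] · ∏_{x ∈ A₁(ξ)} Q^{−2} q^{−2x−2N→_x^1(η)}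
· ∏_{y ∈ A₋₁(ξ)} q^{2y−2N←_y^{−1}(η)} · q^{−2|A₋₁(ξ)||A₁(η)|} · q^{|A₁(ξ)|(|A₁(ξ)|−1)}
· ∏_{y ∈ A₋₁(ξ)} q^{2N→_y^1(ξ)}`. -/
def dualFn (L : ℕ) (q Q : ℝ) : Matrix (Conf L) (Conf L) ℝ :=
  fun η ξ =>
    (if A1 L ξ ⊆ A1 L η ∧ Am1 L ξ ⊆ Am1 L η then (1 : ℝ) else 0) *
    (∏ x ∈ A1 L ξ,
      Q ^ (-2 : ℤ) * q ^ (-2 * ((x : ℕ) : ℤ) - 2 * (NrP L η x : ℤ))) *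
    (∏ y ∈ Am1 L ξ,
      q ^ (2 * ((y : ℕ) : ℤ) - 2 * (NlM L η y : ℤ))) *
    q ^ (-2 * ((Am1 L ξ).card : ℤ) * ((A1 L η).card : ℤ)) *
    q ^ (((A1 L ξ).card : ℤ) * (((A1 L ξ).card : ℤ) - 1)) *
    (∏ y ∈ Am1 L ξ, q ^ (2 * (NrP L ξ y : ℤ)))

lemma zpow_sum₀ {α G₀ : Type*} [CommGroupWithZero G₀] {q : G₀} (hq : q ≠ 0) (s : Finset α)
    (f : α → ℤ) : q ^ (∑ i ∈ s, f i) = ∏ i ∈ s, q ^ f i := by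
  classical
  induction s using Finset.induction_on with
  | empty => simp
  | insert _ _ h ih => rw [Finset.sum_insert h, Finset.prod_insert h, zpow_add₀ hq, ih]

section Sums

variable {α R : Type*} [Fintype α] [DecidableEq α] [CommRing R]

lemma sum_generator_mul (r : α → α → R) (η : α) (f : α → R) :
    ∑ η', (if η' = η then -∑ η'', (if η'' = η then 0 else r η η'') else r η η') * f η' =
      ∑ η', r η η' * (f η' - f η) := by
  simp only [ite_mul, Finset.sum_ite, Finset.filter_eq', Finset.filter_ne', Finset.mem_univ,
    if_true, Finset.sum_singleton, Finset.sum_const_zero, zero_add, mul_sub,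
    Finset.sum_sub_distrib, ← Finset.sum_mul, Finset.sum_erase_eq_sub (Finset.mem_univ η)]
  ring

lemma sum_comp_swap_mul {β : Type*} (g : β → R) (ξ : α → β) (f : α → R) (x y : α) :
    ∑ z, g (ξ (Equiv.swap x y z)) * f z =
      ∑ z, g (ξ z) * f z + (g (ξ y) - g (ξ x)) * (f x - f y) := by
  rw [← Equiv.sum_comp (Equiv.swap x y)]
  simp only [Equiv.swap_apply_self]
  rcases eq_or_ne x y with rfl | hxy
  · simp
  rw [← sub_eq_iff_eq_add', ← Finset.sum_sub_distrib,
    Fintype.sum_eq_add x y hxy fun z hz => by rw [Equiv.swap_apply_of_ne_of_ne hz.1 hz.2, sub_self]]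
  simp only [Equiv.swap_apply_left, Equiv.swap_apply_right]
  ring

lemma sum_update_mul {β : Type*} (g : β → R) (ξ : α → β) (f : α → R) (a : α) (v : β) :
    ∑ z, g (Function.update ξ a v z) * f z = ∑ z, g (ξ z) * f z + (g v - g (ξ a)) * f a := by
  rw [Fintype.sum_eq_add_sum_compl a, Fintype.sum_eq_add_sum_compl a (fun z => g (ξ z) * f z),
    Finset.sum_congr rfl fun z h => by rw [Function.update_of_ne (by simpa using h)],
    Function.update_self]
  ring

lemma sum_mul_ite_eq_add (w f : α → R) (a : α) (c : R) :
    ∑ z, w z * (f z + if z = a then c else 0) = ∑ z, w z * f z + w a * c := by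
  simp [mul_add, Finset.sum_add_distrib, mul_ite]

lemma sum_comp_swap {β : Type*} (g : β → R) (ξ : α → β) (x y : α) :
    ∑ z, g ((ξ ∘ Equiv.swap x y) z) = ∑ z, g (ξ z) :=
  Equiv.sum_comp (Equiv.swap x y) (fun z => g (ξ z))

lemma sum_update {β : Type*} (g : β → R) (ξ : α → β) (a : α) (v : β) :
    ∑ z, g (Function.update ξ a v z) = ∑ z, g (ξ z) + (g v - g (ξ a)) := by
  simpa using sum_update_mul g ξ 1 a v

lemma prod_eq_mul_mul_prod_compl {M : Type*} [CommMonoid M] {x y : α} (hxy : x ≠ y)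
    (f : α → M) : ∏ z, f z = f x * f y * ∏ z ∈ {x, y}ᶜ, f z := by
  rw [← Finset.prod_mul_prod_compl {x, y}, Finset.prod_pair hxy]

end Sums

def occPlus (a : Fin 3) : ℤ := if a = 2 then 1 else 0

def occMinus (a : Fin 3) : ℤ := if a = 0 then 1 else 0

lemma occPlus_add_occMinus {a : Fin 3} (ha : a ≠ 1) : occPlus a + occMinus a = 1 := by
  revert a; decide

lemma occPlus_mul_self (a : Fin 3) : occPlus a * occPlus a = occPlus a := by
  revert a; decide

section Counting

variable {L : ℕ} (η : Conf L)

lemma sum_A1_eq (f : Fin (L + 1) → ℤ) : ∑ z ∈ A1 L η, f z = ∑ z, occPlus (η z) * f z := by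
  simp [A1, Finset.sum_filter, occPlus, ite_mul]

lemma sum_Am1_eq (f : Fin (L + 1) → ℤ) : ∑ z ∈ Am1 L η, f z = ∑ z, occMinus (η z) * f z := by
  simp [Am1, Finset.sum_filter, occMinus, ite_mul]

lemma card_A1_eq : ((A1 L η).card : ℤ) = ∑ z, occPlus (η z) := by
  simpa using sum_A1_eq η 1

lemma card_Am1_eq : ((Am1 L η).card : ℤ) = ∑ z, occMinus (η z) := by
  simpa using sum_Am1_eq η 1

lemma NrP_eq_sum (z : Fin (L + 1)) :
    (NrP L η z : ℤ) = ∑ w, occPlus (η w) * if z < w then 1 else 0 := by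
  simp [NrP, Finset.card_filter, occPlus, ite_and]

lemma NlM_eq_sum (z : Fin (L + 1)) :
    (NlM L η z : ℤ) = ∑ w, occMinus (η w) * if w < z then 1 else 0 := by
  simp [NlM, Finset.card_filter, occMinus, ite_and]

end Counting

section Bond

variable {L : ℕ} (η : Conf L) {x y : Fin (L + 1)} (hxy : (y : ℕ) = x + 1)
include hxy

lemma ite_lt_succ (w : Fin (L + 1)) :
    (if w < y then 1 else 0 : ℤ) = (if w < x then 1 else 0) + if w = x then 1 else 0 := by
  simp only [Fin.lt_def, Fin.ext_iff]
  split_ifs <;> omega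

lemma ite_pred_lt (w : Fin (L + 1)) :
    (if x < w then 1 else 0 : ℤ) = (if y < w then 1 else 0) + if w = y then 1 else 0 := by
  simp only [Fin.lt_def, Fin.ext_iff]
  split_ifs <;> omega

lemma NrP_eq_add_of_succ : (NrP L η x : ℤ) = NrP L η y + occPlus (η y) := by
  simp only [NrP_eq_sum, ite_pred_lt hxy, sum_mul_ite_eq_add]
  ring

lemma NlM_eq_add_of_succ : (NlM L η y : ℤ) = NlM L η x + occMinus (η x) := by
  simp only [NlM_eq_sum, ite_lt_succ hxy, sum_mul_ite_eq_add]
  ring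

lemma NrP_comp_swap (z : Fin (L + 1)) :
    (NrP L (η ∘ Equiv.swap x y) z : ℤ) =
      NrP L η z + if z = x then occPlus (η x) - occPlus (η y) else 0 := by
  simp only [NrP_eq_sum, Function.comp_apply, sum_comp_swap_mul, ite_lt_succ hxy z]
  split_ifs <;> ring

lemma NlM_comp_swap (z : Fin (L + 1)) :
    (NlM L (η ∘ Equiv.swap x y) z : ℤ) =
      NlM L η z + if z = y then occMinus (η y) - occMinus (η x) else 0 := by
  simp only [NlM_eq_sum, Function.comp_apply, sum_comp_swap_mul, ite_pred_lt hxy z]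
  split_ifs <;> ring

end Bond

section Boundary

variable {L : ℕ} (η : Conf L) (v : Fin 3)

lemma sum_mul_ite_pos (g : Fin (L + 1) → ℤ) :
    ∑ w, g w * (if 0 < w then 1 else 0) = ∑ w, g w - g 0 := by
  rw [Fintype.sum_eq_add_sum_compl 0, Fintype.sum_eq_add_sum_compl 0 g,
    Finset.sum_congr rfl fun w h => by
      rw [if_pos (Fin.pos_of_ne_zero (by simpa using h)), mul_one]]
  simp

lemma NrP_zero : (NrP L η 0 : ℤ) = ∑ w, occPlus (η w) - occPlus (η 0) := by
  rw [NrP_eq_sum, sum_mul_ite_pos]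

lemma NlM_zero : NlM L η 0 = 0 := by
  simp [NlM]

lemma NrP_update_zero (z : Fin (L + 1)) :
    (NrP L (Function.update η 0 v) z : ℤ) = NrP L η z := by
  rw [NrP_eq_sum, NrP_eq_sum, sum_update_mul]
  simp

lemma NlM_update_zero (z : Fin (L + 1)) :
    (NlM L (Function.update η 0 v) z : ℤ) =
      NlM L η z + (occMinus v - occMinus (η 0)) * if 0 < z then 1 else 0 := by
  simp only [NlM_eq_sum, sum_update_mul]

end Boundary

def dualIndicator (a b : Fin 3) : ℝ := if b = 1 ∨ a = b then 1 else 0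

def dualExponent (L : ℕ) (η ξ : Conf L) : ℤ :=
  ∑ z, occPlus (ξ z) * (-2 * (z : ℕ) - 2 * NrP L η z) +
    ∑ z, occMinus (ξ z) * (2 * (z : ℕ) - 2 * NlM L η z + 2 * NrP L ξ z) -
    2 * (∑ z, occMinus (ξ z)) * ∑ z, occPlus (η z) +
    (∑ z, occPlus (ξ z)) * (∑ z, occPlus (ξ z) - 1)

section DualFn

variable {L : ℕ} {q : ℝ} (Q : ℝ)

lemma subset_A1_and_subset_Am1_iff (η ξ : Conf L) :
    A1 L ξ ⊆ A1 L η ∧ Am1 L ξ ⊆ Am1 L η ↔ ∀ z, ξ z = 1 ∨ η z = ξ z := by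
  have key : ∀ a b : Fin 3, ((b = 2 → a = 2) ∧ (b = 0 → a = 0) ↔ b = 1 ∨ a = b) := by decide
  simp only [A1, Am1, Finset.subset_iff, Finset.mem_filter, Finset.mem_univ, true_and,
    ← forall_and, key]

lemma dualFn_eq (hq : q ≠ 0) (η ξ : Conf L) :
    dualFn L q Q η ξ = (∏ z, dualIndicator (η z) (ξ z)) *
      Q ^ (-2 * ∑ z, occPlus (ξ z)) * q ^ dualExponent L η ξ := by
  have hind : (if A1 L ξ ⊆ A1 L η ∧ Am1 L ξ ⊆ Am1 L η then (1 : ℝ) else 0) =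
      ∏ z, dualIndicator (η z) (ξ z) := by
    simp only [dualIndicator, Finset.prod_boole, Finset.mem_univ, true_implies,
      subset_A1_and_subset_Am1_iff]
  have hQ : ∏ _x ∈ A1 L ξ, Q ^ (-2 : ℤ) = Q ^ (-2 * ((A1 L ξ).card : ℤ)) := by
    rw [Finset.prod_const, ← zpow_natCast, ← _root_.zpow_mul, mul_comm]
  simp only [dualFn, hind, Finset.prod_mul_distrib, hQ]
  simp only [dualExponent, ← sum_A1_eq, ← sum_Am1_eq, ← card_A1_eq, ← card_Am1_eq,
    zpow_add₀ hq, zpow_sub₀ hq, zpow_sum₀ hq, Finset.prod_mul_distrib, neg_mul, _root_.zpow_neg]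
  ring

end DualFn

def bondShiftLeft (a b c d : Fin 3) : ℤ :=
  -2 * occPlus c * (occPlus a - occPlus b) - 2 * occMinus d * (occMinus b - occMinus a)

def bondShiftRight (a b c d : Fin 3) : ℤ :=
  (occPlus d - occPlus c) * (2 - 2 * occPlus b) +
    (occMinus d - occMinus c) * (-2 + 2 * occMinus a + 2 * occPlus d) +
    2 * occMinus d * (occPlus c - occPlus d)

section Exponent

variable {L : ℕ} (η ξ : Conf L)

lemma dualExponent_comp_swap_left {x y : Fin (L + 1)} (hxy : (y : ℕ) = x + 1) :
    dualExponent L (η ∘ Equiv.swap x y) ξ =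
      dualExponent L η ξ + bondShiftLeft (η x) (η y) (ξ x) (ξ y) := by
  simp only [dualExponent, sum_comp_swap, NrP_comp_swap η hxy, NlM_comp_swap η hxy, mul_add,
    mul_sub, Finset.sum_add_distrib, Finset.sum_sub_distrib, mul_ite, mul_zero,
    Fintype.sum_ite_eq', bondShiftLeft]
  ring

lemma dualExponent_comp_swap_right {x y : Fin (L + 1)} (hxy : (y : ℕ) = x + 1) :
    dualExponent L η (ξ ∘ Equiv.swap x y) =
      dualExponent L η ξ + bondShiftRight (η x) (η y) (ξ x) (ξ y) := by
  have hPlus : ∑ z, occPlus ((ξ ∘ Equiv.swap x y) z) * (-2 * (z : ℕ) - 2 * NrP L η z) =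
      ∑ z, occPlus (ξ z) * (-2 * (z : ℕ) - 2 * NrP L η z) +
        (occPlus (ξ y) - occPlus (ξ x)) * (2 - 2 * occPlus (η y)) := by
    rw [Function.comp_def, sum_comp_swap_mul occPlus, NrP_eq_add_of_succ η hxy, hxy]
    push_cast
    ring
  have hMinus : ∑ z, occMinus ((ξ ∘ Equiv.swap x y) z) *
        (2 * (z : ℕ) - 2 * NlM L η z + 2 * NrP L (ξ ∘ Equiv.swap x y) z) =
      ∑ z, occMinus (ξ z) * (2 * (z : ℕ) - 2 * NlM L η z + 2 * NrP L ξ z) +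
        (occMinus (ξ y) - occMinus (ξ x)) * (-2 + 2 * occMinus (η x) + 2 * occPlus (ξ y)) +
        2 * occMinus (ξ y) * (occPlus (ξ x) - occPlus (ξ y)) := by
    simp only [NrP_comp_swap ξ hxy, mul_add (2 : ℤ), mul_ite, mul_zero, ← add_assoc,
      sum_mul_ite_eq_add, Function.comp_apply]
    rw [sum_comp_swap_mul occMinus, Equiv.swap_apply_left, NrP_eq_add_of_succ ξ hxy,
      NlM_eq_add_of_succ η hxy, hxy]
    push_cast
    ring
  rw [dualExponent, dualExponent, hPlus, hMinus, sum_comp_swap, sum_comp_swap, bondShiftRight]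
  ring

lemma dualExponent_update_left (v : Fin 3) (hη : η 0 ≠ 1) (hv : v ≠ 1) :
    dualExponent L (Function.update η 0 v) ξ =
      dualExponent L η ξ + 2 * occMinus (ξ 0) * (occMinus v - occMinus (η 0)) := by
  have hPlus : ∑ z, occPlus (ξ z) * (-2 * (z : ℕ) - 2 * NrP L (Function.update η 0 v) z) =
      ∑ z, occPlus (ξ z) * (-2 * (z : ℕ) - 2 * NrP L η z) := by
    simp only [NrP_update_zero]
  have hMinus : ∑ z, occMinus (ξ z) *
        (2 * (z : ℕ) - 2 * NlM L (Function.update η 0 v) z + 2 * NrP L ξ z) =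
      ∑ z, occMinus (ξ z) * (2 * (z : ℕ) - 2 * NlM L η z + 2 * NrP L ξ z) -
        2 * (occMinus v - occMinus (η 0)) * (∑ z, occMinus (ξ z) - occMinus (ξ 0)) := by
    have hsplit : ∀ z, occMinus (ξ z) *
          (2 * (z : ℕ) - 2 * NlM L (Function.update η 0 v) z + 2 * NrP L ξ z) =
        occMinus (ξ z) * (2 * (z : ℕ) - 2 * NlM L η z + 2 * NrP L ξ z) +
          -2 * (occMinus v - occMinus (η 0)) * occMinus (ξ z) * if 0 < z then 1 else 0 := by
      intro z
      rw [NlM_update_zero]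
      ring
    simp only [hsplit, Finset.sum_add_distrib, sum_mul_ite_pos, ← Finset.mul_sum]
    ring
  rw [dualExponent, dualExponent, hPlus, hMinus, sum_update]
  linear_combination (-2 * ∑ z, occMinus (ξ z)) *
    (occPlus_add_occMinus hv - occPlus_add_occMinus hη)

lemma dualExponent_update_right (v : Fin 3) (hξ : ξ 0 ≠ 1) (hv : v ≠ 1) :
    dualExponent L η (Function.update ξ 0 v) =
      dualExponent L η ξ + 2 * occPlus (η 0) * (occPlus v - occPlus (ξ 0)) := by
  have hPlus : ∑ z, occPlus (Function.update ξ 0 v z) * (-2 * (z : ℕ) - 2 * NrP L η z) =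
      ∑ z, occPlus (ξ z) * (-2 * (z : ℕ) - 2 * NrP L η z) +
        (occPlus v - occPlus (ξ 0)) * (-2 * NrP L η 0) := by
    simp [sum_update_mul]
  have hMinus : ∑ z, occMinus (Function.update ξ 0 v z) *
        (2 * (z : ℕ) - 2 * NlM L η z + 2 * NrP L (Function.update ξ 0 v) z) =
      ∑ z, occMinus (ξ z) * (2 * (z : ℕ) - 2 * NlM L η z + 2 * NrP L ξ z) +
        (occMinus v - occMinus (ξ 0)) * (2 * NrP L ξ 0) := by
    simp [NrP_update_zero, sum_update_mul, NlM_zero]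
  rw [dualExponent, dualExponent, hPlus, hMinus, sum_update, sum_update, NrP_zero η, NrP_zero ξ]
  linear_combination (2 * ∑ z, occPlus (ξ z) - 2 * ∑ z, occPlus (η z) - 2 * occPlus (ξ 0)) *
      (occPlus_add_occMinus hv - occPlus_add_occMinus hξ) +
    occPlus_mul_self v - occPlus_mul_self (ξ 0)

end Exponent

def swapRate (q : ℝ) (a b : Fin 3) : ℝ := if a = b then 0 else if b < a then q ^ 2 else 1

def bdryAction (Q : ℝ) (a : Fin 3) (F : Fin 3 → ℝ) : ℝ :=
  if a = 2 then F 0 - F 2 else if a = 0 then Q ^ 2 * (F 2 - F 0) else 0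

section Local

variable {q : ℝ} (Q : ℝ)

lemma bond_duality_local (a b c d : Fin 3) :
    swapRate q a b * (dualIndicator b c * dualIndicator a d * q ^ bondShiftLeft a b c d -
        dualIndicator a c * dualIndicator b d) =
      swapRate q c d * (dualIndicator a d * dualIndicator b c * q ^ bondShiftRight a b c d -
        dualIndicator a c * dualIndicator b d) := by
  fin_cases a <;> fin_cases b <;> fin_cases c <;> fin_cases d <;>
    simp [swapRate, dualIndicator, bondShiftLeft, bondShiftRight, occPlus, occMinus,
      _root_.zpow_neg, ← pow_add]

lemma bdry_duality_local (hQ : Q ≠ 0) (a b : Fin 3) :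
    bdryAction Q a
        (fun v => dualIndicator v b * q ^ (2 * occMinus b * (occMinus v - occMinus a))) =
      bdryAction Q b (fun v => dualIndicator a v * Q ^ (-2 * (occPlus v - occPlus b)) *
        q ^ (2 * occPlus a * (occPlus v - occPlus b))) := by
  fin_cases a <;> fin_cases b <;>
    simp [bdryAction, dualIndicator, occPlus, occMinus, _root_.zpow_neg, hQ]

end Local

section Generator

variable {L : ℕ} (q Q : ℝ)

lemma sum_bulk_mul (η : Conf L) (g : Conf L → ℝ) :
    ∑ η', bulk L q η η' * g η' =
      ∑ x : Fin (L + 1), if h : (x : ℕ) + 1 < L + 1 then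
        swapRate q (η x) (η ⟨x + 1, h⟩) * g (η ∘ Equiv.swap x ⟨x + 1, h⟩) else 0 := by
  simp only [bulk, Finset.sum_mul]
  rw [Finset.sum_comm]
  refine Finset.sum_congr rfl fun x _ => ?_
  by_cases h : (x : ℕ) + 1 < L + 1
  · simp only [dif_pos h, ite_and, ite_mul, zero_mul, Finset.sum_ite_eq', Finset.mem_univ,
      if_true, ne_eq, ite_not, swapRate]
  · simp only [dif_neg h, zero_mul, Finset.sum_const_zero]

lemma bdry_eq_ite (η η' : Conf L) :
    bdry L Q η η' =
      if η 0 = 2 then (if η' = Function.update η 0 0 then 1 else 0)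
      else if η 0 = 0 then (if η' = Function.update η 0 2 then Q ^ 2 else 0) else 0 := by
  simp only [bdry, Function.eq_update_iff]
  split_ifs <;> simp_all

lemma sum_bdry_mul (η : Conf L) (f : Conf L → ℝ) :
    ∑ η', bdry L Q η η' * (f η' - f η) =
      bdryAction Q (η 0) (fun v => f (Function.update η 0 v)) := by
  simp only [bdry_eq_ite, bdryAction]
  split_ifs with h2 h0
  · simp [ite_mul, Finset.sum_ite_eq', ← h2]
  · simp [ite_mul, Finset.sum_ite_eq', ← h0]
  · simp

lemma sum_gen_mul (η : Conf L) (f : Conf L → ℝ) :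
    ∑ η', gen L q Q η η' * f η' =
      (∑ x : Fin (L + 1), if h : (x : ℕ) + 1 < L + 1 then
        swapRate q (η x) (η ⟨x + 1, h⟩) * (f (η ∘ Equiv.swap x ⟨x + 1, h⟩) - f η) else 0) +
      bdryAction Q (η 0) (fun v => f (Function.update η 0 v)) := by
  unfold gen
  rw [sum_generator_mul (fun ζ ζ' => bulk L q ζ ζ' + bdry L Q ζ ζ')]
  simp only [add_mul, Finset.sum_add_distrib, sum_bulk_mul, sum_bdry_mul]

end Generator

section Duality

variable {L : ℕ} {q Q : ℝ}

lemma bond_duality (hq : q ≠ 0) (η ξ : Conf L) {x y : Fin (L + 1)} (hxy : (y : ℕ) = x + 1) :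
    swapRate q (η x) (η y) * (dualFn L q Q (η ∘ Equiv.swap x y) ξ - dualFn L q Q η ξ) =
      swapRate q (ξ x) (ξ y) * (dualFn L q Q η (ξ ∘ Equiv.swap x y) - dualFn L q Q η ξ) := by
  have hne : x ≠ y := fun h => by simp [h] at hxy
  have hfix : ∀ z ∈ ({x, y} : Finset (Fin (L + 1)))ᶜ, Equiv.swap x y z = z := fun z hz => by
    simp only [Finset.mem_compl, Finset.mem_insert, Finset.mem_singleton, not_or] at hz
    exact Equiv.swap_apply_of_ne_of_ne hz.1 hz.2
  set R := ∏ z ∈ {x, y}ᶜ, dualIndicator (η z) (ξ z)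
  have hRleft : ∏ z ∈ {x, y}ᶜ, dualIndicator ((η ∘ Equiv.swap x y) z) (ξ z) = R :=
    Finset.prod_congr rfl fun z hz => by rw [Function.comp_apply, hfix z hz]
  have hRright : ∏ z ∈ {x, y}ᶜ, dualIndicator (η z) ((ξ ∘ Equiv.swap x y) z) = R :=
    Finset.prod_congr rfl fun z hz => by rw [Function.comp_apply, hfix z hz]
  rw [dualFn_eq Q hq, dualFn_eq Q hq, dualFn_eq Q hq, dualExponent_comp_swap_left η ξ hxy,
    dualExponent_comp_swap_right η ξ hxy, sum_comp_swap, prod_eq_mul_mul_prod_compl hne,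
    prod_eq_mul_mul_prod_compl hne, prod_eq_mul_mul_prod_compl hne, hRleft, hRright,
    zpow_add₀ hq, zpow_add₀ hq]
  simp only [Function.comp_apply, Equiv.swap_apply_left, Equiv.swap_apply_right]
  linear_combination (R * Q ^ (-2 * ∑ z, occPlus (ξ z)) * q ^ dualExponent L η ξ) *
    bond_duality_local (η x) (η y) (ξ x) (ξ y)

lemma bdryAction_congr {a : Fin 3} {F G : Fin 3 → ℝ} (h : ∀ v, a ≠ 1 → v ≠ 1 → F v = G v) :
    bdryAction Q a F = bdryAction Q a G := by
  unfold bdryAction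
  split_ifs with h2 h0
  · rw [h 0 (by simp [h2]) (by decide), h 2 (by simp [h2]) (by decide)]
  · rw [h 0 (by simp [h0]) (by decide), h 2 (by simp [h0]) (by decide)]
  · rfl

lemma bdryAction_mul_left (a : Fin 3) (c : ℝ) (F : Fin 3 → ℝ) :
    bdryAction Q a (fun v => c * F v) = c * bdryAction Q a F := by
  unfold bdryAction
  split_ifs <;> ring

lemma bdry_duality (hq : q ≠ 0) (hQ : Q ≠ 0) (η ξ : Conf L) :
    bdryAction Q (η 0) (fun v => dualFn L q Q (Function.update η 0 v) ξ) =
      bdryAction Q (ξ 0) (fun v => dualFn L q Q η (Function.update ξ 0 v)) := by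
  set R := ∏ z ∈ {0}ᶜ, dualIndicator (η z) (ξ z)
  have hRleft (v : Fin 3) : ∏ z ∈ {0}ᶜ, dualIndicator (Function.update η 0 v z) (ξ z) = R :=
    Finset.prod_congr rfl fun z hz => by rw [Function.update_of_ne (by simpa using hz)]
  have hRright (v : Fin 3) : ∏ z ∈ {0}ᶜ, dualIndicator (η z) (Function.update ξ 0 v z) = R :=
    Finset.prod_congr rfl fun z hz => by rw [Function.update_of_ne (by simpa using hz)]
  set W := R * Q ^ (-2 * ∑ z, occPlus (ξ z)) * q ^ dualExponent L η ξ
  have hleft : ∀ v, η 0 ≠ 1 → v ≠ 1 → dualFn L q Q (Function.update η 0 v) ξ =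
      W * (dualIndicator v (ξ 0) *
        q ^ (2 * occMinus (ξ 0) * (occMinus v - occMinus (η 0)))) := by
    intro v hη hv
    rw [dualFn_eq Q hq, dualExponent_update_left η ξ v hη hv, Fintype.prod_eq_mul_prod_compl 0,
      hRleft, Function.update_self, zpow_add₀ hq]
    ring
  have hright : ∀ v, ξ 0 ≠ 1 → v ≠ 1 → dualFn L q Q η (Function.update ξ 0 v) =
      W * (dualIndicator (η 0) v * Q ^ (-2 * (occPlus v - occPlus (ξ 0))) *
        q ^ (2 * occPlus (η 0) * (occPlus v - occPlus (ξ 0)))) := by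
    intro v hξ hv
    rw [dualFn_eq Q hq, dualExponent_update_right η ξ v hξ hv, Fintype.prod_eq_mul_prod_compl 0,
      hRright, Function.update_self, sum_update, mul_add, zpow_add₀ hq, zpow_add₀ hQ]
    ring
  rw [bdryAction_congr hleft, bdryAction_congr hright, bdryAction_mul_left, bdryAction_mul_left,
    bdry_duality_local Q hQ]

end Duality

theorem open_ASEP_self_duality_general (L : ℕ)
    (q Q : ℝ) (hq0 : 0 < q) (hQ0 : 0 < Q) :
    gen L q Q * dualFn L q Q = dualFn L q Q * (gen L q Q)ᵀ := by
  ext η ξ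
  simp only [Matrix.mul_apply, Matrix.transpose_apply, mul_comm (dualFn L q Q η _)]
  rw [sum_gen_mul, sum_gen_mul]
  congr 1
  · refine Finset.sum_congr rfl fun x _ => ?_
    split_ifs with h
    · exact bond_duality hq0.ne' η ξ rfl
    · rfl
  · exact bdry_duality hq0.ne' hQ0.ne' η ξ

/-- **Self-duality of the single-species open ASEP** (Theorem 1.3 with `r = 1`):
the generator `𝓛` satisfies `𝓛 · D = D · 𝓛ᵀ` for the duality function `D` above. -/
theorem open_ASEP_self_duality (L : ℕ) (hL : 1 ≤ L)
    (q Q : ℝ) (hq0 : 0 < q) (hq1 : q < 1) (hQ0 : 0 < Q) (hQ1 : Q < 1) :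
    gen L q Q * dualFn L q Q = dualFn L q Q * (gen L q Q)ᵀ :=
  open_ASEP_self_duality_general L q Q hq0 hQ0

end Stmt1

end
end

section
/- Let I be a finite index set, let H and S be real I×I matrices with HS = SH, let B and G be invertible diagonal real I×I matrices such that B^{−1}HB is symmetric, i.e. (B^{−1}HB)ᵀ = B^{−1}HB, and let λ ∈ ℝ. Then the matrices 𝓛 := G^{−1}(H − λ·Id)G and D := G^{−1} S G^{−1} B² satisfy the duality relation 𝓛 D = D 𝓛ᵀ. -/
open Matrix

lemma diag_commute {I : Type*} [Fintype I] [DecidableEq I] {A B : Matrix I I ℝ}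
    (hA : A.IsDiag) (hB : B.IsDiag) : A * B = B * A := by
  rw [← hA.diagonal_diag, ← hB.diagonal_diag, diagonal_mul_diagonal, diagonal_mul_diagonal]
  simp [mul_comm]

/-- **Framework for Markov duality** (Section 2.1 of the paper): if `H` commutes with a
symmetry `S`, and `B`, `G` are invertible diagonal matrices with `B⁻¹HB` symmetric, then
`𝓛 := G⁻¹(H − λ·Id)G` and `D := G⁻¹SG⁻¹B²` satisfy the duality relation `𝓛D = D𝓛ᵀ`. -/
theorem duality_framework {I : Type*} [Fintype I] [DecidableEq I]
    (H S B G : Matrix I I ℝ) (lam : ℝ)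
    (hHS : H * S = S * H)
    (hB : B.IsDiag) (hG : G.IsDiag)
    (hBunit : IsUnit B.det) (hGunit : IsUnit G.det)
    (hsym : (B⁻¹ * H * B)ᵀ = B⁻¹ * H * B) :
    (G⁻¹ * (H - lam • (1 : Matrix I I ℝ)) * G) * (G⁻¹ * S * G⁻¹ * B ^ 2) =
      (G⁻¹ * S * G⁻¹ * B ^ 2) * (G⁻¹ * (H - lam • (1 : Matrix I I ℝ)) * G)ᵀ := by
  have hBinv : (B⁻¹).IsDiag := by
    rw [← hB.diagonal_diag, inv_diagonal]; exact isDiag_diagonal _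
  have hGinv : (G⁻¹).IsDiag := by
    rw [← hG.diagonal_diag, inv_diagonal]; exact isDiag_diagonal _
  have hGG : G * G⁻¹ = 1 := mul_nonsing_inv G hGunit
  have hGG' : G⁻¹ * G = 1 := nonsing_inv_mul G hGunit
  have hBB : B * B⁻¹ = 1 := mul_nonsing_inv B hBunit
  have hBB' : B⁻¹ * B = 1 := nonsing_inv_mul B hBunit
  have hGsym : Gᵀ = G := by
    rw [← hG.diagonal_diag, diagonal_transpose]
  have hGinvsym : (G⁻¹)ᵀ = G⁻¹ := by
    rw [transpose_nonsing_inv, hGsym]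
  have hBsym : Bᵀ = B := by
    rw [← hB.diagonal_diag, diagonal_transpose]
  have hBinvsym : (B⁻¹)ᵀ = B⁻¹ := by
    rw [transpose_nonsing_inv, hBsym]
  -- key: B^2 * Hᵀ = H * B^2
  have hkey : B ^ 2 * Hᵀ = H * B ^ 2 := by
    have h1 : B * Hᵀ * B⁻¹ = B⁻¹ * H * B := by
      rw [← hsym]; simp [transpose_mul, hBsym, hBinvsym, mul_assoc]
    calc B ^ 2 * Hᵀ = B * (B * Hᵀ * B⁻¹) * B := by
          rw [sq]; simp only [mul_assoc, hBB', mul_one]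
      _ = B * (B⁻¹ * H * B) * B := by rw [h1]
      _ = H * B ^ 2 := by
          rw [sq]; simp only [← mul_assoc, hBB, one_mul]
  have hB2 : (B ^ 2).IsDiag := by
    rw [sq, ← hB.diagonal_diag, diagonal_mul_diagonal]; exact isDiag_diagonal _
  have hHlam : (H - lam • 1) * S = S * (H - lam • 1) := by
    simp [sub_mul, mul_sub, hHS, Matrix.smul_mul, Matrix.mul_smul]
  have hkey2 : B ^ 2 * (H - lam • (1 : Matrix I I ℝ))ᵀ = (H - lam • 1) * B ^ 2 := by
    simp [transpose_sub, transpose_smul, transpose_one, mul_sub, sub_mul, hkey,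
      Matrix.mul_smul, Matrix.smul_mul]
  calc (G⁻¹ * (H - lam • (1 : Matrix I I ℝ)) * G) * (G⁻¹ * S * G⁻¹ * B ^ 2)
      = G⁻¹ * (H - lam • 1) * (G * G⁻¹) * S * G⁻¹ * B ^ 2 := by
        simp only [mul_assoc]
    _ = G⁻¹ * ((H - lam • 1) * S) * G⁻¹ * B ^ 2 := by
        rw [hGG]; simp only [mul_assoc, one_mul, mul_one]
    _ = G⁻¹ * (S * (H - lam • 1)) * G⁻¹ * B ^ 2 := by rw [hHlam]
    _ = G⁻¹ * S * ((H - lam • 1) * B ^ 2) * G⁻¹ := by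
        rw [mul_assoc _ G⁻¹ (B ^ 2), diag_commute hGinv hB2]; simp only [mul_assoc]
    _ = G⁻¹ * S * (B ^ 2 * (H - lam • 1)ᵀ) * G⁻¹ := by rw [hkey2]
    _ = G⁻¹ * S * G⁻¹ * B ^ 2 * (G * ((H - lam • 1)ᵀ * G⁻¹)) := by
        rw [show (G⁻¹ : Matrix I I ℝ) * S * G⁻¹ * B ^ 2 * (G * ((H - lam • 1)ᵀ * G⁻¹))
            = G⁻¹ * S * (G⁻¹ * (B ^ 2 * G)) * ((H - lam • 1)ᵀ * G⁻¹) by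
          simp only [mul_assoc]]
        rw [diag_commute hB2 hG,
          show G⁻¹ * (G * B ^ 2) = B ^ 2 by rw [← mul_assoc, hGG', one_mul]]
        simp only [mul_assoc]
    _ = (G⁻¹ * S * G⁻¹ * B ^ 2) * (G⁻¹ * (H - lam • (1 : Matrix I I ℝ)) * G)ᵀ := by
        simp only [transpose_mul, hGsym, hGinvsym, mul_assoc]
end
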